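/- arXiv:2307.05044 — 4 statements merged into one kernel-verified Lean document; each statement's English description precedes it below -/
import Mathlib

section
/- Let a₂ > 0, a₁, a₀ be real numbers with a₀ = μ²(1 − R)Λ and a₁ = W ω β μ + (1 − Φ)Λμ + (1 − R)Λμ, where μ, Λ, W, ω, β > 0 and Φ ∈ (0,1). If R ≤ 1 then the quadratic a₂x² + a₁x + a₀ has no positive real root; if R > 1 it has exactly one positive real root. -/
/-!
For `R ≤ 1` all three coefficients are nonnegative and `a₂, a₁ > 0`, so the quadratic is positive
on `(0, ∞)`. For `R > 1` the constant term is negative while `a₂ > 0`: the discriminant then exceeds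
`a₁²`, which puts the larger root of the quadratic formula on the positive axis, and by Vieta the
product of the roots is `a₀ / a₂ < 0`, so there is no second positive root.
-/

section Quadratic

variable {a b c : ℝ}

theorem exists_pos_quadratic_root_of_const_neg (ha : 0 < a) (hc : c < 0) :
    ∃ x : ℝ, 0 < x ∧ a * x ^ 2 + b * x + c = 0 := by
  have hdiscrim : b ^ 2 < discrim a b c := by
    have hac : a * c < 0 := mul_neg_of_pos_of_neg ha hc
    unfold discrim
    linarith
  set s := √(discrim a b c)
  have hs : discrim a b c = s * s :=
    (Real.mul_self_sqrt ((sq_nonneg b).trans hdiscrim.le)).symm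
  have hbs : b < s :=
    calc b ≤ |b| := le_abs_self b
      _ = √(b ^ 2) := (Real.sqrt_sq_eq_abs b).symm
      _ < s := Real.sqrt_lt_sqrt (sq_nonneg b) hdiscrim
  refine ⟨(-b + s) / (2 * a), div_pos (by linarith) (by positivity), ?_⟩
  rw [sq, quadratic_eq_zero_iff ha.ne' hs]
  exact Or.inl rfl

theorem pos_quadratic_root_unique_of_const_neg (ha : 0 < a) (hc : c < 0) {x y : ℝ}
    (hx : 0 < x) (hy : 0 < y) (hxroot : a * x ^ 2 + b * x + c = 0)
    (hyroot : a * y ^ 2 + b * y + c = 0) : x = y := by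
  by_contra hne
  have hsum : a * (x + y) + b = 0 := by
    have hfactor : (x - y) * (a * (x + y) + b) = 0 := by linear_combination hxroot - hyroot
    exact (mul_eq_zero.mp hfactor).resolve_left (sub_ne_zero.mpr hne)
  have hprod : a * (x * y) = c := by linear_combination x * hsum - hxroot
  linarith [mul_pos ha (mul_pos hx hy)]

theorem existsUnique_pos_quadratic_root_of_const_neg (ha : 0 < a) (hc : c < 0) :
    ∃! x : ℝ, 0 < x ∧ a * x ^ 2 + b * x + c = 0 := by
  obtain ⟨x, hx, hxroot⟩ := exists_pos_quadratic_root_of_const_neg (b := b) ha hc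
  exact ⟨x, ⟨hx, hxroot⟩, fun y ⟨hy, hyroot⟩ =>
    pos_quadratic_root_unique_of_const_neg ha hc hy hx hyroot hxroot⟩

end Quadratic

theorem quadratic_positive_roots_general (μ Λ W ω β Φ R a₂ a₁ a₀ : ℝ)
    (hμ : 0 < μ) (hΛ : 0 < Λ) (hW : 0 < W) (hω : 0 < ω) (hβ : 0 < β)
    (hΦ1 : Φ < 1)
    (ha₂ : a₂ = (1 - Φ) * Λ)
    (ha₁ : a₁ = W * ω * β * μ + (1 - Φ) * Λ * μ + (1 - R) * Λ * μ)
    (ha₀ : a₀ = μ ^ 2 * (1 - R) * Λ) :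
    (R ≤ 1 → ¬ ∃ x : ℝ, 0 < x ∧ a₂ * x ^ 2 + a₁ * x + a₀ = 0) ∧
    (1 < R → ∃! x : ℝ, 0 < x ∧ a₂ * x ^ 2 + a₁ * x + a₀ = 0) := by
  have hΦ : 0 < 1 - Φ := sub_pos.mpr hΦ1
  have ha₂pos : 0 < a₂ := ha₂ ▸ mul_pos hΦ hΛ
  constructor
  · rintro hR1 ⟨x, hx, hroot⟩
    have hR1' : 0 ≤ 1 - R := sub_nonneg.mpr hR1
    have ha₁pos : 0 < a₁ := by rw [ha₁]; positivity
    have ha₀nonneg : 0 ≤ a₀ := by rw [ha₀]; positivity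
    exact (by positivity : 0 < a₂ * x ^ 2 + a₁ * x + a₀).ne' hroot
  · intro hR1
    have ha₀neg : a₀ < 0 := by
      rw [ha₀]
      exact mul_neg_of_neg_of_pos (mul_neg_of_pos_of_neg (by positivity) (by linarith)) hΛ
    exact existsUnique_pos_quadratic_root_of_const_neg ha₂pos ha₀neg

theorem quadratic_positive_roots (μ Λ W ω β Φ R a₂ a₁ a₀ : ℝ)
    (hμ : 0 < μ) (hΛ : 0 < Λ) (hW : 0 < W) (hω : 0 < ω) (hβ : 0 < β)
    (hΦ0 : 0 < Φ) (hΦ1 : Φ < 1) (hR : 0 < R)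
    (ha₂ : a₂ = (1 - Φ) * Λ)
    (ha₁ : a₁ = W * ω * β * μ + (1 - Φ) * Λ * μ + (1 - R) * Λ * μ)
    (ha₀ : a₀ = μ ^ 2 * (1 - R) * Λ) :
    (R ≤ 1 → ¬ ∃ x : ℝ, 0 < x ∧ a₂ * x ^ 2 + a₁ * x + a₀ = 0) ∧
    (1 < R → ∃! x : ℝ, 0 < x ∧ a₂ * x ^ 2 + a₁ * x + a₀ = 0) :=
  quadratic_positive_roots_general μ Λ W ω β Φ R a₂ a₁ a₀ hμ hΛ hW hω hβ hΦ1 ha₂ ha₁ ha₀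
end

section
/- Let R^q(α) be as in the quarantine reproduction number with limits R₀ = R^q at α → 0 and R∞ = R^q at α → ∞. If R₀ > 1 and R∞ < 1, then the unique solution α* of R^q(α) = 1 is α* = (R₀ − 1)(ρ + μ)/(1 − R∞), and α* > 0. -/
/-!
Dividing numerator and denominator by `D` exhibits the reproduction number as the weighted
average `R^q(α) = (α R∞ + (ρ + μ) R₀) / (α + ρ + μ)`, so `R^q(α) = 1` is the linear equation
`α (1 - R∞) = (ρ + μ) (R₀ - 1)`.
-/

theorem weighted_average_eq_one_iff {x y c α : ℝ} (hαc : α + c ≠ 0) (hx : x ≠ 1) :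
    (α * x + c * y) / (α + c) = 1 ↔ α = (y - 1) * c / (1 - x) := by
  rw [div_eq_one_iff_eq hαc, eq_div_iff (sub_ne_zero.mpr hx.symm)]
  constructor <;> intro h <;> linear_combination -h

theorem quarantine_reproduction_number_eq_weighted_average
    {β ρ σ τ μ q r D α : ℝ} (hρμ : ρ + μ ≠ 0) (hD : D ≠ 0) :
    β * (α * q + ρ * σ + α * τ + r * ρ) / ((α + ρ + μ) * D) =
      (α * (β * (q + τ) / D) + (ρ + μ) * (β * ρ * (σ + r) / ((ρ + μ) * D))) /
        (α + (ρ + μ)) := by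
  field_simp
  ring

theorem critical_alpha_general (β ρ σ τ μ q r D R₀ Rinf : ℝ)
    (hρ : 0 < ρ) (hμ : 0 < μ)
    (hD : 0 < D)
    (hR0 : R₀ = β * ρ * (σ + r) / ((ρ + μ) * D))
    (hRinf : Rinf = β * (q + τ) / D)
    (h1 : 1 < R₀) (h2 : Rinf < 1) :
    0 < (R₀ - 1) * (ρ + μ) / (1 - Rinf) ∧
    ∀ α : ℝ, 0 < α →
      (β * (α * q + ρ * σ + α * τ + r * ρ) / ((α + ρ + μ) * D) = 1 ↔
        α = (R₀ - 1) * (ρ + μ) / (1 - Rinf)) := by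
  have hρμ : 0 < ρ + μ := add_pos hρ hμ
  refine ⟨div_pos (mul_pos (sub_pos.mpr h1) hρμ) (sub_pos.mpr h2), fun α hα => ?_⟩
  rw [quarantine_reproduction_number_eq_weighted_average hρμ.ne' hD.ne', ← hR0, ← hRinf]
  exact weighted_average_eq_one_iff (by positivity) h2.ne

theorem critical_alpha (β ρ σ τ μ q r D R₀ Rinf : ℝ)
    (hβ : 0 < β) (hρ : 0 < ρ) (hσ : 0 < σ) (hτ : 0 < τ) (hμ : 0 < μ)
    (hq : 0 < q) (hr : 0 < r) (hD : 0 < D)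
    (hR0 : R₀ = β * ρ * (σ + r) / ((ρ + μ) * D))
    (hRinf : Rinf = β * (q + τ) / D)
    (h1 : 1 < R₀) (h2 : Rinf < 1) :
    0 < (R₀ - 1) * (ρ + μ) / (1 - Rinf) ∧
    ∀ α : ℝ, 0 < α →
      (β * (α * q + ρ * σ + α * τ + r * ρ) / ((α + ρ + μ) * D) = 1 ↔
        α = (R₀ - 1) * (ρ + μ) / (1 - Rinf)) :=
  critical_alpha_general β ρ σ τ μ q r D R₀ Rinf hρ hμ hD hR0 hRinf h1 h2
end

section
/- The Jacobian of the transformed single-strain system at the DFE with bifurcation parameter β* = p(q̇r + r̃σ)/(αq + ρσ + ατ + rρ) has zero as an eigenvalue: the vector w = (−b₁/b₅, μb₁/(p b₅), μb₃/b₅, μb₂/b₅, 1) satisfies Jw = 0 for the 5×5 matrix J with rows (−μ, 0, −β*, −β*, 0), (0, −p, β*, β*, 0), (0, ρ, −q, τ, 0), (0, α, σ, −r, 0), (0, 0, γ, φ, −μ). -/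
/-!
Since `q̇ = q - σ` and `r̃ = r - τ`, we have `b₁ = p (q r - σ τ)`, and `(b₃, b₂)` solves the
`(q, -τ; -σ, r)` block of the Jacobian with right-hand side `(ρ, α) b₁ / p`; `β*` is exactly the
value with `β* (b₂ + b₃) = b₁`. After scaling `w` by `p b₅` the claim `J w = 0` is therefore a
polynomial identity, valid over any commutative ring.
-/

section Jacobian

open Matrix

variable {R : Type*} [CommRing R]

def dfeJacobian (μ ρ α σ τ γ φ p q r β : R) : Matrix (Fin 5) (Fin 5) R :=
  !![-μ, 0, -β, -β, 0;
     0, -p, β, β, 0;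
     0, ρ, -q, τ, 0;
     0, α, σ, -r, 0;
     0, 0, γ, φ, -μ]

theorem dfeJacobian_mulVec_eq_zero {μ ρ α σ τ γ φ p q r β b₁ b₂ b₃ b₅ : R}
    (hb₁ : b₁ = p * (q * r - σ * τ)) (hb₂ : b₂ = α * q + ρ * σ) (hb₃ : b₃ = α * τ + r * ρ)
    (hb₅ : b₅ = φ * b₂ + γ * b₃) (hβ : β * (b₂ + b₃) = b₁) :
    dfeJacobian μ ρ α σ τ γ φ p q r β *ᵥ ![-(p * b₁), μ * b₁, μ * p * b₃, μ * p * b₂, p * b₅]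
      = 0 := by
  ext i
  fin_cases i <;>
    simp only [mulVec, dotProduct, dfeJacobian, Fin.zero_eta, Fin.mk_one, Fin.reduceFinMk,
      Fin.isValue, of_apply, cons_val', cons_val_fin_one, cons_val, cons_val_one, cons_val_zero,
      Fin.sum_univ_five, mul_neg, neg_mul, neg_neg, neg_zero, zero_mul, zero_add, add_zero,
      Pi.zero_apply]
  · linear_combination -(μ * p) * hβ
  · linear_combination μ * p * hβ
  · linear_combination ρ * μ * hb₁ + τ * μ * p * hb₂ - q * μ * p * hb₃
  · linear_combination α * μ * hb₁ - r * μ * p * hb₂ + σ * μ * p * hb₃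
  · linear_combination -(μ * p) * hb₅

end Jacobian

theorem jacobian_zero_eigenvalue (μ ρ α σ τ γ φ δ p q r b₁ b₂ b₃ b₅ βs : ℝ)
    (hμ : 0 < μ) (hρ : 0 < ρ) (hα : 0 < α) (hσ : 0 < σ) (hτ : 0 < τ)
    (hγ : 0 < γ) (hφ : 0 < φ) (hδ : 0 < δ)
    (hp : p = α + ρ + μ) (hq : q = γ + σ + δ + μ) (hr : r = φ + τ + δ + μ)
    (hb₁ : b₁ = p * ((γ + δ + μ) * r + (φ + δ + μ) * σ))
    (hb₂ : b₂ = α * q + ρ * σ) (hb₃ : b₃ = α * τ + r * ρ)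
    (hb₅ : b₅ = φ * b₂ + γ * b₃)
    (hβs : βs = b₁ / (b₂ + b₃)) :
    Matrix.mulVec
      !![-μ, 0, -βs, -βs, 0;
         0, -p, βs, βs, 0;
         0, ρ, -q, τ, 0;
         0, α, σ, -r, 0;
         0, 0, γ, φ, -μ]
      ![-b₁ / b₅, μ * b₁ / (p * b₅), μ * b₃ / b₅, μ * b₂ / b₅, 1] = 0 := by
  have hp₀ : p ≠ 0 := by subst hp; positivity
  have hb₅₀ : b₅ ≠ 0 := by subst hb₅ hb₂ hb₃ hq hr; positivity
  have hβ : βs * (b₂ + b₃) = b₁ := by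
    rw [hβs, div_mul_cancel₀]
    subst hb₂ hb₃ hq hr; positivity
  have hdet : b₁ = p * (q * r - σ * τ) := by subst hb₁ hq hr; ring
  have hw : ![-b₁ / b₅, μ * b₁ / (p * b₅), μ * b₃ / b₅, μ * b₂ / b₅, 1]
      = (p * b₅)⁻¹ • ![-(p * b₁), μ * b₁, μ * p * b₃, μ * p * b₂, p * b₅] := by
    ext i
    fin_cases i <;>
      simp only [Fin.zero_eta, Fin.mk_one, Fin.reduceFinMk, Fin.isValue, Matrix.cons_val,
        Matrix.cons_val_one, Matrix.cons_val_zero, Pi.smul_apply, smul_eq_mul] <;>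
      field_simp
  rw [hw, Matrix.mulVec_smul]
  exact smul_eq_zero_of_right _ (dfeJacobian_mulVec_eq_zero hdet hb₂ hb₃ hb₅ hβ)
end

section
/- For the total death proportion Φ = (αδq + δrρ + δρσ + αδτ)/(p(q̇r + r̃σ)), if δ < min{q̇, r̃} and parameters are positive with q = q̇ + σ and r = r̃ + τ, then 0 < Φ < 1. -/
/-!
The denominator exceeds the numerator by a sum of products of the positive parameters, so
`Φ = N / (N + S)` with `N, S > 0`.
-/

lemma div_add_mem_Ioo {a b : ℝ} (ha : 0 < a) (hb : 0 < b) : a / (a + b) ∈ Set.Ioo 0 1 :=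
  ⟨by positivity, (div_lt_one (by positivity)).2 (lt_add_of_pos_right a hb)⟩

lemma death_denominator_eq_numerator_add {R : Type*} [CommRing R] (α δ ρ σ τ μ γ φ : R) :
    (α + ρ + μ) * ((γ + δ + μ) * (φ + τ + δ + μ) + (φ + δ + μ) * σ) =
      (α * δ * (γ + σ + δ + μ) + δ * (φ + τ + δ + μ) * ρ + δ * ρ * σ + α * δ * τ) +
        (ρ * ((γ + μ) * (φ + τ + δ + μ) + (φ + μ) * σ)
          + μ * ((γ + δ + μ) * (φ + τ + δ + μ) + (φ + δ + μ) * σ)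
          + α * (δ * φ + γ * (φ + τ + μ) + μ * (φ + τ + δ + μ) + (φ + μ) * σ)) := by
  ring

theorem death_proportion_in_unit_interval_general (α δ ρ σ τ μ γ φ : ℝ)
    (hα : 0 < α) (hδ : 0 < δ) (hρ : 0 < ρ) (hσ : 0 < σ) (hτ : 0 < τ)
    (hμ : 0 < μ) (hγ : 0 < γ) (hφ : 0 < φ) :
    let qd := γ + δ + μ
    let rt := φ + δ + μ
    let q := γ + σ + δ + μ
    let r := φ + τ + δ + μ
    let p := α + ρ + μ
    let Φ := (α * δ * q + δ * r * ρ + δ * ρ * σ + α * δ * τ) / (p * (qd * r + rt * σ))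
    0 < Φ ∧ Φ < 1 := by
  dsimp only
  rw [death_denominator_eq_numerator_add]
  exact div_add_mem_Ioo (by positivity) (by positivity)

theorem death_proportion_in_unit_interval (α δ ρ σ τ μ γ φ : ℝ)
    (hα : 0 < α) (hδ : 0 < δ) (hρ : 0 < ρ) (hσ : 0 < σ) (hτ : 0 < τ)
    (hμ : 0 < μ) (hγ : 0 < γ) (hφ : 0 < φ)
    (hδq : δ < min (γ + δ + μ) (φ + δ + μ)) :
    let qd := γ + δ + μ
    let rt := φ + δ + μ
    let q := γ + σ + δ + μ
    let r := φ + τ + δ + μ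
    let p := α + ρ + μ
    let Φ := (α * δ * q + δ * r * ρ + δ * ρ * σ + α * δ * τ) / (p * (qd * r + rt * σ))
    0 < Φ ∧ Φ < 1 :=
  death_proportion_in_unit_interval_general α δ ρ σ τ μ γ φ hα hδ hρ hσ hτ hμ hγ hφ
end
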